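/- If P is a finite set of n points in the plane with pairwise distances at most 1, then there exists a closed disc of radius 1/√3 containing all n points of P. -/

import Mathlib

open Metric

local notation "E2" => EuclideanSpace ℝ (Fin 2)

lemma normsq_comb (v w : EuclideanSpace ℝ (Fin 2)) (s t : ℝ) :
    ‖s • v + t • w‖ ^ 2 =
      s ^ 2 * ‖v‖ ^ 2 + 2 * s * t * (inner ℝ v w : ℝ) + t ^ 2 * ‖w‖ ^ 2 := by
  rw [norm_add_sq_real, norm_smul, norm_smul, real_inner_smul_left, real_inner_smul_right]
  simp [mul_pow, sq_abs]
  ring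

lemma le_inv_sqrt3 {d : ℝ} (hd : 0 ≤ d) (h : d ^ 2 ≤ 1 / 3) : d ≤ 1 / Real.sqrt 3 := by
  have h3 : (0:ℝ) < Real.sqrt 3 := Real.sqrt_pos.2 (by norm_num)
  rw [le_div_iff₀ h3]
  nlinarith [Real.sq_sqrt (by norm_num : (0:ℝ) ≤ 3), Real.sqrt_nonneg 3, sq_nonneg (d * Real.sqrt 3 - 1)]

set_option maxHeartbeats 1000000 in
/-- Jung for three points, assuming `dist a b` is the largest distance. -/
lemma jung3max (a b c : EuclideanSpace ℝ (Fin 2)) (hab : dist a b ≤ 1)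
    (h1 : dist a c ≤ dist a b) (h2 : dist b c ≤ dist a b) :
    ∃ x : EuclideanSpace ℝ (Fin 2),
      dist x a ≤ 1 / Real.sqrt 3 ∧ dist x b ≤ 1 / Real.sqrt 3 ∧ dist x c ≤ 1 / Real.sqrt 3 := by
  set v := b - a with hv
  set w := c - a with hw
  set p := ‖v‖ ^ 2 with hpdef
  set q := ‖w‖ ^ 2 with hqdef
  set r : ℝ := inner ℝ v w with hrdef
  have hb : b = a + v := by rw [hv]; abel
  have hc : c = a + w := by rw [hw]; abel
  have hdab : dist a b = ‖v‖ := by rw [dist_eq_norm, hv, norm_sub_rev]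
  have hdac : dist a c = ‖w‖ := by rw [dist_eq_norm, hw, norm_sub_rev]
  have hdbc : dist b c = ‖v - w‖ := by
    rw [dist_eq_norm, hb, hc]; congr 1; abel
  have hp1 : p ≤ 1 := by
    rw [hpdef, ← hdab]; nlinarith [dist_nonneg (x := a) (y := b)]
  have hqp : q ≤ p := by
    rw [hpdef, hqdef, ← hdab, ← hdac]
    nlinarith [dist_nonneg (x := a) (y := c), dist_nonneg (x := a) (y := b)]
  have hbc2 : ‖v - w‖ ^ 2 = p + q - 2 * r := by
    rw [norm_sub_sq_real]; rw [hpdef, hqdef, hrdef]; ring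
  have hrhalf : q ≤ 2 * r := by
    have h : dist b c ^ 2 ≤ dist a b ^ 2 := by
      nlinarith [dist_nonneg (x := b) (y := c), dist_nonneg (x := a) (y := b)]
    rw [hdbc, hdab, hbc2, ← hpdef] at h
    linarith
  have hq0 : 0 ≤ q := sq_nonneg _
  have hp0 : 0 ≤ p := sq_nonneg _
  -- key: distances from x = a + s•v + t•w
  have hdist : ∀ s t : ℝ,
      dist (a + s • v + t • w) a ^ 2 = s ^ 2 * p + 2 * s * t * r + t ^ 2 * q ∧
      dist (a + s • v + t • w) b ^ 2 = (s - 1) ^ 2 * p + 2 * (s - 1) * t * r + t ^ 2 * q ∧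
      dist (a + s • v + t • w) c ^ 2 = s ^ 2 * p + 2 * s * (t - 1) * r + (t - 1) ^ 2 * q := by
    intro s t
    refine ⟨?_, ?_, ?_⟩
    · rw [dist_eq_norm, show a + s • v + t • w - a = s • v + t • w by abel, normsq_comb]
    · rw [dist_eq_norm, hb, show a + s • v + t • w - (a + v) = (s - 1) • v + t • w by
        rw [sub_smul, one_smul]; abel, normsq_comb]
    · rw [dist_eq_norm, hc, show a + s • v + t • w - (a + w) = s • v + (t - 1) • w by
        rw [sub_smul, one_smul]; abel, normsq_comb]
  rcases le_or_gt q r with hcase | hcase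
  · -- midpoint of a b
    refine ⟨a + (1/2 : ℝ) • v + (0:ℝ) • w, ?_, ?_, ?_⟩
    · refine le_inv_sqrt3 dist_nonneg ?_
      rw [(hdist (1/2) 0).1]; nlinarith
    · refine le_inv_sqrt3 dist_nonneg ?_
      rw [(hdist (1/2) 0).2.1]; nlinarith
    · refine le_inv_sqrt3 dist_nonneg ?_
      rw [(hdist (1/2) 0).2.2]; nlinarith
  · -- circumcenter
    have hq0' : 0 < q := by linarith
    have hr0 : 0 < r := by linarith
    have hD : 0 < p * q - r ^ 2 := by nlinarith
    have hDne : p * q - r ^ 2 ≠ 0 := ne_of_gt hD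
    set s : ℝ := q * (p - r) / (2 * (p * q - r ^ 2)) with hs
    set t : ℝ := p * (q - r) / (2 * (p * q - r ^ 2)) with ht
    have key : s ^ 2 * p + 2 * s * t * r + t ^ 2 * q
        = p * q * (p + q - 2 * r) / (4 * (p * q - r ^ 2)) := by
      rw [hs, ht]; generalize hDg : p * q - r ^ 2 = D at hDne ⊢; field_simp; subst hDg; ring
    have eqb : (s - 1) ^ 2 * p + 2 * (s - 1) * t * r + t ^ 2 * q
        = s ^ 2 * p + 2 * s * t * r + t ^ 2 * q := by
      rw [hs, ht]; generalize hDg : p * q - r ^ 2 = D at hDne ⊢; field_simp; subst hDg; ring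
    have eqc : s ^ 2 * p + 2 * s * (t - 1) * r + (t - 1) ^ 2 * q
        = s ^ 2 * p + 2 * s * t * r + t ^ 2 * q := by
      rw [hs, ht]; generalize hDg : p * q - r ^ 2 = D at hDne ⊢; field_simp; subst hDg; ring
    have bound : p * q * (p + q - 2 * r) / (4 * (p * q - r ^ 2)) ≤ 1 / 3 := by
      rw [div_le_iff₀ (by linarith)]
      nlinarith [mul_nonneg hp0 (mul_nonneg (by linarith : (0:ℝ) ≤ 2*r - q) (by linarith : (0:ℝ) ≤ q - r)),
        mul_nonneg hp0 (mul_nonneg hq0 (by linarith : (0:ℝ) ≤ p - q)),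
        mul_nonneg (by linarith : (0:ℝ) ≤ 1 - p) (le_of_lt hD)]
    refine ⟨a + s • v + t • w, ?_, ?_, ?_⟩
    · refine le_inv_sqrt3 dist_nonneg ?_
      rw [(hdist s t).1, key]; exact bound
    · refine le_inv_sqrt3 dist_nonneg ?_
      rw [(hdist s t).2.1, eqb, key]; exact bound
    · refine le_inv_sqrt3 dist_nonneg ?_
      rw [(hdist s t).2.2, eqc, key]; exact bound

/-- Jung for three points. -/
lemma jung3 (a b c : EuclideanSpace ℝ (Fin 2)) (hab : dist a b ≤ 1)
    (hac : dist a c ≤ 1) (hbc : dist b c ≤ 1) :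
    ∃ x : EuclideanSpace ℝ (Fin 2),
      dist x a ≤ 1 / Real.sqrt 3 ∧ dist x b ≤ 1 / Real.sqrt 3 ∧ dist x c ≤ 1 / Real.sqrt 3 := by
  rcases le_total (dist a c) (dist a b) with h1 | h1
  · rcases le_total (dist b c) (dist a b) with h2 | h2
    · obtain ⟨x, hx1, hx2, hx3⟩ := jung3max a b c hab h1 h2
      exact ⟨x, hx1, hx2, hx3⟩
    · obtain ⟨x, hx1, hx2, hx3⟩ := jung3max b c a hbc
        (by rw [dist_comm b a]; linarith) (by rw [dist_comm c a]; linarith)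
      exact ⟨x, hx3, hx1, hx2⟩
  · rcases le_total (dist b c) (dist a c) with h2 | h2
    · obtain ⟨x, hx1, hx2, hx3⟩ := jung3max a c b hac h1 (by rw [dist_comm c b]; linarith)
      exact ⟨x, hx1, hx3, hx2⟩
    · obtain ⟨x, hx1, hx2, hx3⟩ := jung3max b c a hbc
        (by rw [dist_comm b a]; linarith) (by rw [dist_comm c a]; linarith)
      exact ⟨x, hx3, hx1, hx2⟩

/-- Jung's theorem in the plane for finite sets: a set of `n` points with pairwise
distances at most 1 is contained in a closed disc of radius `1/√3`. -/
theorem jung_plane_finite (n : ℕ) (P : Finset (EuclideanSpace ℝ (Fin 2)))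
    (hcard : P.card = n) (hdiam : ∀ p ∈ P, ∀ q ∈ P, dist p q ≤ 1) :
    ∃ c : EuclideanSpace ℝ (Fin 2), ∀ p ∈ P, p ∈ closedBall c (1 / Real.sqrt 3) := by
  classical
  set R : ℝ := 1 / Real.sqrt 3 with hR
  have hdim : Module.finrank ℝ (EuclideanSpace ℝ (Fin 2)) = 2 := finrank_euclideanSpace_fin
  have key : (⋂ p ∈ P, closedBall p R).Nonempty := by
    apply Convex.helly_theorem' (𝕜 := ℝ) (fun p _ ↦ convex_closedBall p R)
    intro I hIP hIcard
    rw [hdim] at hIcard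
    rcases Finset.eq_empty_or_nonempty I with hI | ⟨a0, ha0⟩
    · subst hI; simp
    have ha0P : a0 ∈ P := hIP ha0
    obtain ⟨a, b, c, haP, hbP, hcP, hcover⟩ :
        ∃ a b c, a ∈ P ∧ b ∈ P ∧ c ∈ P ∧ (I : Set _) ⊆ {a, b, c} := by
      interval_cases h : I.card
      · exact absurd h (by simp [Finset.card_eq_zero, Finset.nonempty_iff_ne_empty.mp ⟨a0, ha0⟩])
      · obtain ⟨a, ha⟩ := Finset.card_eq_one.mp h
        exact ⟨a, a, a, hIP (ha ▸ Finset.mem_singleton_self a),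
          hIP (ha ▸ Finset.mem_singleton_self a), hIP (ha ▸ Finset.mem_singleton_self a),
          by simp [ha]⟩
      · obtain ⟨a, b, -, hab⟩ := Finset.card_eq_two.mp h
        refine ⟨a, b, b, hIP (by simp [hab]), hIP (by simp [hab]), hIP (by simp [hab]), ?_⟩
        intro x hx; simp [hab] at hx ⊢; tauto
      · obtain ⟨a, b, c, -, -, -, habc⟩ := Finset.card_eq_three.mp h
        refine ⟨a, b, c, hIP (by simp [habc]), hIP (by simp [habc]), hIP (by simp [habc]), ?_⟩
        intro x hx; simp [habc] at hx ⊢; tauto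
    obtain ⟨x, hxa, hxb, hxc⟩ := jung3 a b c (hdiam a haP b hbP) (hdiam a haP c hcP)
      (hdiam b hbP c hcP)
    refine ⟨x, ?_⟩
    simp only [Set.mem_iInter, mem_closedBall]
    intro p hp
    rcases hcover hp with h | h | h <;> subst h <;> assumption
  obtain ⟨x, hx⟩ := key
  simp only [Set.mem_iInter, mem_closedBall] at hx
  exact ⟨x, fun p hp ↦ by rw [mem_closedBall, dist_comm]; exact hx p hp⟩
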